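/- Fix real numbers α > 0, β > 0, and R > 0, and set γ_R = α·γ_D and γ_E = (α/β)·γ_D (so that γ_R = α·γ_D = β·γ_E). Then (i) lim_{γ_D → ∞} 𝒫₃(α·γ_D, γ_D, (α/β)·γ_D, R) = 𝒫₃^lim := 1 − (β/(β + α·2^R))·(β/(β + 2^R)), and (ii) lim_{γ_D → ∞} γ_D · (𝒫₃(α·γ_D, γ_D, (α/β)·γ_D, R) − 𝒫₃^lim) = 𝓜̂₃ := (2^R − 1)(1 + 1/α) / ((1 + (α/β)·2^R)·(1 + (1/β)·2^R)). -/

import Mathlib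

/-! Along `γ_R = α γ_D = β γ_E` the two rational factors of `𝒫₃` do not depend on `γ_D`, and the
exponential factor is `exp (-K / γ_D)` with `K = (2^R - 1)(1 + 1/α)`. Hence `𝒫₃ → 1 - A` for the
constant product `A` of the rational factors, and `γ_D (𝒫₃ - (1 - A)) = A γ_D (1 - exp (-K / γ_D))`
tends to `A K`, the derivative of `exp` at `0` scaled by `K`. -/

open Filter Real Topology

/-- Case III closed-form secrecy outage probability. -/
noncomputable def P3 (γR γD γE R : ℝ) : ℝ :=
  1 - Real.exp (-((2 : ℝ) ^ R - 1) / γD - ((2 : ℝ) ^ R - 1) / γR) *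
    (1 + ((2 : ℝ) ^ R / γD) * γE)⁻¹ * (1 + ((2 : ℝ) ^ R / γR) * γE)⁻¹

theorem Real.tendsto_mul_exp_div_sub_one_atTop (a : ℝ) :
    Tendsto (fun x : ℝ => x * (exp (a / x) - 1)) atTop (𝓝 a) := by
  have hderiv : HasDerivAt (fun t => exp (a * t)) a 0 := by
    simpa using ((hasDerivAt_id (0 : ℝ)).const_mul a).exp
  refine (hderiv.tendsto_slope_zero_right.comp tendsto_inv_atTop_nhdsGT_zero).congr fun x => ?_
  simp [div_eq_mul_inv]

theorem P3_proportional (α β R : ℝ) {γ : ℝ} (hα : α ≠ 0) (hβ : β ≠ 0) (hγ : γ ≠ 0) :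
    P3 (α * γ) γ ((α / β) * γ) R =
      1 - exp (-(((2 : ℝ) ^ R - 1) * (1 + 1 / α)) / γ) *
        (β / (β + α * (2 : ℝ) ^ R) * (β / (β + (2 : ℝ) ^ R))) := by
  have hexponent : -((2 : ℝ) ^ R - 1) / γ - ((2 : ℝ) ^ R - 1) / (α * γ) =
      -(((2 : ℝ) ^ R - 1) * (1 + 1 / α)) / γ := by
    field_simp
    ring
  have hfactorD : (1 + ((2 : ℝ) ^ R / γ) * ((α / β) * γ))⁻¹ = β / (β + α * (2 : ℝ) ^ R) := by
    rw [← inv_div]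
    field_simp
  have hfactorR : (1 + ((2 : ℝ) ^ R / (α * γ)) * ((α / β) * γ))⁻¹ = β / (β + (2 : ℝ) ^ R) := by
    rw [← inv_div]
    field_simp
  rw [P3, hexponent, hfactorD, hfactorR, mul_assoc]

theorem case3_asymptotic_proportional_general (α β R : ℝ) (hα : 0 < α) (hβ : 0 < β) :
    Tendsto (fun γD : ℝ => P3 (α * γD) γD ((α / β) * γD) R) atTop
      (nhds (1 - β / (β + α * (2 : ℝ) ^ R) * (β / (β + (2 : ℝ) ^ R)))) ∧
    Tendsto (fun γD : ℝ =>
        γD * (P3 (α * γD) γD ((α / β) * γD) R -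
          (1 - β / (β + α * (2 : ℝ) ^ R) * (β / (β + (2 : ℝ) ^ R)))))
      atTop
      (nhds (((2 : ℝ) ^ R - 1) * (1 + 1 / α) /
        ((1 + (α / β) * (2 : ℝ) ^ R) * (1 + (1 / β) * (2 : ℝ) ^ R)))) := by
  set K := ((2 : ℝ) ^ R - 1) * (1 + 1 / α)
  set A := β / (β + α * (2 : ℝ) ^ R) * (β / (β + (2 : ℝ) ^ R))
  have hclosed : ∀ᶠ γ in atTop, P3 (α * γ) γ ((α / β) * γ) R = 1 - exp (-K / γ) * A :=
    (eventually_ne_atTop 0).mono fun γ hγ => P3_proportional α β R hα.ne' hβ.ne' hγ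
  have hexp : Tendsto (fun γ : ℝ => exp (-K / γ)) atTop (𝓝 1) := by
    simpa [Function.comp_def] using
      (continuous_exp.tendsto 0).comp (tendsto_const_nhds.div_atTop tendsto_id)
  have hAK : A * K = ((2 : ℝ) ^ R - 1) * (1 + 1 / α) /
      ((1 + (α / β) * (2 : ℝ) ^ R) * (1 + (1 / β) * (2 : ℝ) ^ R)) := by
    have : 0 < (2 : ℝ) ^ R := rpow_pos_of_pos two_pos R
    simp only [A, K]
    field_simp
  constructor
  · refine Tendsto.congr' (hclosed.mono fun γ h => h.symm) ?_
    simpa using tendsto_const_nhds.sub (hexp.mul_const A)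
  · have hscaled : ∀ᶠ γ in atTop, A * -(γ * (exp (-K / γ) - 1)) =
        γ * (P3 (α * γ) γ ((α / β) * γ) R - (1 - A)) :=
      hclosed.mono fun γ h => by rw [h]; ring
    rw [← hAK]
    simpa using ((tendsto_mul_exp_div_sub_one_atTop (-K)).neg.const_mul A).congr' hscaled

/-- Theorem 9 (Case III, second high-SNR scenario): with `γ_R = α·γ_D = β·γ_E → ∞`,
(i) `𝒫₃ → 𝒫₃^lim = 1 − (β/(β + α·2^R))·(β/(β + 2^R))` and
(ii) `γ_D·(𝒫₃ − 𝒫₃^lim) → 𝓜̂₃ = (2^R − 1)(1 + 1/α)/((1 + (α/β)·2^R)(1 + (1/β)·2^R))`. -/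
theorem case3_asymptotic_proportional (α β R : ℝ) (hα : 0 < α) (hβ : 0 < β) (hR : 0 < R) :
    Tendsto (fun γD : ℝ => P3 (α * γD) γD ((α / β) * γD) R) atTop
      (nhds (1 - β / (β + α * (2 : ℝ) ^ R) * (β / (β + (2 : ℝ) ^ R)))) ∧
    Tendsto (fun γD : ℝ =>
        γD * (P3 (α * γD) γD ((α / β) * γD) R -
          (1 - β / (β + α * (2 : ℝ) ^ R) * (β / (β + (2 : ℝ) ^ R)))))
      atTop
      (nhds (((2 : ℝ) ^ R - 1) * (1 + 1 / α) /
        ((1 + (α / β) * (2 : ℝ) ^ R) * (1 + (1 / β) * (2 : ℝ) ^ R)))) :=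
  case3_asymptotic_proportional_general α β R hα hβ
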